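/- Let Σ and Σ̂ be real symmetric positive semidefinite d×d matrices, λ > 0, and 0 ≤ c̃ < 1/2. If ‖(Σ + λI)^{-1/2}·(Σ − Σ̂)·(Σ + λI)^{-1/2}‖ ≤ c̃, then ‖(Σ̂ + λI)^{1/2}·(Σ + λI)^{-1/2}‖ ≤ √((1 − c̃)/(1 − 2c̃)). -/

import Mathlib

open Matrix MeasureTheory

/-- The operator norm of a real `d × d` matrix induced by the Euclidean norm on `ℝ^d`. -/
noncomputable def opNorm {d : ℕ} (A : Matrix (Fin d) (Fin d) ℝ) : ℝ :=
  ‖Matrix.toEuclideanCLM (𝕜 := ℝ) A‖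

/-- The Euclidean norm `‖x‖₂` of a vector `x ∈ ℝ^d`. -/
noncomputable def enorm2 {d : ℕ} (x : Fin d → ℝ) : ℝ :=
  Real.sqrt (∑ i, x i ^ 2)

/-- Apply a scalar function to the eigenvalues of a symmetric matrix (continuous
functional calculus); junk value `0` if the matrix is not symmetric. -/
noncomputable def matFun {d : ℕ} (A : Matrix (Fin d) (Fin d) ℝ) (h : ℝ → ℝ) :
    Matrix (Fin d) (Fin d) ℝ :=
  if hA : A.IsHermitian then
    (hA.eigenvectorUnitary : Matrix (Fin d) (Fin d) ℝ) *
      Matrix.diagonal (fun i => h (hA.eigenvalues i)) *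
      star (hA.eigenvectorUnitary : Matrix (Fin d) (Fin d) ℝ)
  else 0

/-! With `R = (Σ + λI)^{1/2}`, `Q = (Σ̂ + λI)^{1/2}` and `E = R⁻¹ (Σ - Σ̂) R⁻¹`, one has
`(Q R⁻¹)ᵀ (Q R⁻¹) = R⁻¹ Q² R⁻¹ = R⁻¹ (R² - (Σ - Σ̂)) R⁻¹ = I - E`, so the C⋆-identity gives
`‖Q R⁻¹‖² = ‖I - E‖ ≤ 1 + c̃`, and `1 + c̃ ≤ (1 - c̃) / (1 - 2c̃)` because
`(1 + c̃)(1 - 2c̃) = 1 - c̃ - 2c̃²`. -/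

open scoped Matrix.Norms.L2Operator

lemma CStarRing.norm_one_le {E : Type*} [NormedRing E] [StarRing E] [CStarRing E] :
    ‖(1 : E)‖ ≤ 1 := by
  rcases subsingleton_or_nontrivial E with _ | _
  · simp [Subsingleton.elim (1 : E) 0]
  · exact CStarRing.norm_one.le

lemma CStarRing.sq_norm_le_of_star_mul_self_eq_one_sub {E : Type*} [NormedRing E] [StarRing E]
    [CStarRing E] {x e : E} (hx : star x * x = 1 - e) : ‖x‖ ^ 2 ≤ 1 + ‖e‖ :=
  calc ‖x‖ ^ 2 = ‖star x * x‖ := by rw [CStarRing.norm_star_mul_self, sq]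
    _ = ‖1 - e‖ := by rw [hx]
    _ ≤ ‖(1 : E)‖ + ‖e‖ := norm_sub_le _ _
    _ ≤ 1 + ‖e‖ := by grw [CStarRing.norm_one_le]

lemma cfc_sqrt_mul_self {A : Type*} [Ring A] [StarRing A] [Algebra ℝ A] [TopologicalSpace A]
    [ContinuousFunctionalCalculus ℝ A IsSelfAdjoint] {a : A}
    (ha : ∀ x ∈ spectrum ℝ a, 0 ≤ x) (ha' : IsSelfAdjoint a := by cfc_tac) :
    cfc Real.sqrt a * cfc Real.sqrt a = a := by
  conv_rhs => rw [← cfc_id' ℝ a]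
  rw [← cfc_mul ..]
  exact cfc_congr fun x hx => Real.mul_self_sqrt (ha x hx)

lemma opNorm_eq_norm {d : ℕ} (A : Matrix (Fin d) (Fin d) ℝ) : opNorm A = ‖A‖ := rfl

lemma matFun_eq_cfc {d : ℕ} {A : Matrix (Fin d) (Fin d) ℝ} (hA : A.IsHermitian) (f : ℝ → ℝ) :
    matFun A f = cfc f A := by
  rw [matFun, dif_pos hA, hA.cfc_eq, IsHermitian.cfc, Unitary.conjStarAlgAut_apply]
  rfl

namespace Matrix

variable {n α : Type*} [Fintype n] [DecidableEq n] [CommRing α] [StarRing α]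

lemma PosSemidef.cfc_sqrt_mul_self {A : Matrix n n ℝ} (hA : A.PosSemidef) :
    cfc Real.sqrt A * cfc Real.sqrt A = A :=
  _root_.cfc_sqrt_mul_self
    (fun _ hx => (posSemidef_iff_isHermitian_and_spectrum_nonneg.mp hA).2 hx)
    hA.isHermitian.isSelfAdjoint

lemma star_mul_self_mul_nonsing_inv {R Q : Matrix n n α} (hR : R.IsHermitian) (hQ : Q.IsHermitian)
    (hRu : IsUnit R) : star (Q * R⁻¹) * (Q * R⁻¹) = 1 - R⁻¹ * (R * R - Q * Q) * R⁻¹ := by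
  have hdet := (isUnit_iff_isUnit_det R).mp hRu
  rw [star_mul, star_eq_conjTranspose, star_eq_conjTranspose, conjTranspose_nonsing_inv, hR.eq,
    hQ.eq, mul_sub, sub_mul, ← Matrix.mul_assoc R⁻¹ R R, nonsing_inv_mul _ hdet, Matrix.one_mul,
    mul_nonsing_inv _ hdet, sub_sub_cancel]
  simp only [Matrix.mul_assoc]

end Matrix

lemma one_add_le_div_one_sub_two_mul {c : ℝ} (hc : c < 1 / 2) :
    1 + c ≤ (1 - c) / (1 - 2 * c) := by
  rw [le_div_iff₀ (by linarith)]
  nlinarith [sq_nonneg c]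

theorem statement2_general {d : ℕ} (S Shat : Matrix (Fin d) (Fin d) ℝ)
    (hS : S.PosSemidef) (hShat : Shat.PosSemidef) (lam c : ℝ)
    (hlam : 0 < lam) (hc : c < 1 / 2)
    (h : opNorm ((matFun (S + lam • 1) Real.sqrt)⁻¹ * (S - Shat) *
        (matFun (S + lam • 1) Real.sqrt)⁻¹) ≤ c) :
    opNorm (matFun (Shat + lam • 1) Real.sqrt * (matFun (S + lam • 1) Real.sqrt)⁻¹) ≤
      Real.sqrt ((1 - c) / (1 - 2 * c)) := by
  have hA : (S + lam • 1).PosDef := PosDef.posSemidef_add hS (PosDef.one.smul hlam)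
  have hB : (Shat + lam • 1).PosSemidef := hShat.add (PosSemidef.one.smul hlam.le)
  rw [matFun_eq_cfc hA.isHermitian, opNorm_eq_norm] at h
  rw [matFun_eq_cfc hA.isHermitian, matFun_eq_cfc hB.isHermitian, opNorm_eq_norm]
  set R := cfc Real.sqrt (S + lam • 1)
  set Q := cfc Real.sqrt (Shat + lam • 1)
  have hRR : R * R = S + lam • 1 := hA.posSemidef.cfc_sqrt_mul_self
  have hRu : IsUnit R := isUnit_of_mul_isUnit_left (hRR ▸ hA.isUnit)
  have hstar : star (Q * R⁻¹) * (Q * R⁻¹) = 1 - R⁻¹ * (S - Shat) * R⁻¹ := by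
    rw [star_mul_self_mul_nonsing_inv (cfc_predicate (a := S + lam • 1) Real.sqrt)
      (cfc_predicate (a := Shat + lam • 1) Real.sqrt) hRu, hRR,
      hB.cfc_sqrt_mul_self, add_sub_add_right_eq_sub]
  refine Real.le_sqrt_of_sq_le ?_
  calc ‖Q * R⁻¹‖ ^ 2 ≤ 1 + ‖R⁻¹ * (S - Shat) * R⁻¹‖ :=
        CStarRing.sq_norm_le_of_star_mul_self_eq_one_sub hstar
    _ ≤ 1 + c := by grw [h]
    _ ≤ (1 - c) / (1 - 2 * c) := one_add_le_div_one_sub_two_mul hc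

/-- If `Σ, Σ̂` are PSD, `λ > 0`, `0 ≤ c̃ < 1/2` and
`‖(Σ+λI)^{-1/2} (Σ - Σ̂) (Σ+λI)^{-1/2}‖ ≤ c̃`, then
`‖(Σ̂+λI)^{1/2} (Σ+λI)^{-1/2}‖ ≤ √((1-c̃)/(1-2c̃))`. -/
theorem statement2 {d : ℕ} (hd : 0 < d) (S Shat : Matrix (Fin d) (Fin d) ℝ)
    (hS : S.PosSemidef) (hShat : Shat.PosSemidef) (lam c : ℝ)
    (hlam : 0 < lam) (hc0 : 0 ≤ c) (hc : c < 1 / 2)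
    (h : opNorm ((matFun (S + lam • 1) Real.sqrt)⁻¹ * (S - Shat) *
        (matFun (S + lam • 1) Real.sqrt)⁻¹) ≤ c) :
    opNorm (matFun (Shat + lam • 1) Real.sqrt * (matFun (S + lam • 1) Real.sqrt)⁻¹) ≤
      Real.sqrt ((1 - c) / (1 - 2 * c)) :=
  statement2_general S Shat hS hShat lam c hlam hc h
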